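/- arXiv:1011.1154 — 8 statements merged into one kernel-verified Lean document; each statement's English description precedes it below -/
import Mathlib

section
/- In a generalized metric space (M,d), for any point x ∈ M and any forward Cauchy sequence {y_m}, the sequence {d(x, y_m)} converges in ℝ. -/
open Filter Topology

/-- A generalized metric space: `d` is nonnegative, separates points symmetrically,
satisfies the triangle inequality, and convergence `d (xₙ, x) → 0` is equivalent
to `d (x, xₙ) → 0` (axiom (a4)). -/
structure GenMetric (M : Type*) where
  d : M → M → ℝ
  d_nonneg : ∀ x y, 0 ≤ d x y
  d_eq_zero_iff : ∀ x y, (d x y = 0 ∧ d y x = 0) ↔ x = y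
  d_triangle : ∀ x y z, d x z ≤ d x y + d y z
  symm_conv : ∀ (x : M) (u : ℕ → M),
    Tendsto (fun n => d (u n) x) atTop (𝓝 0) ↔ Tendsto (fun n => d x (u n)) atTop (𝓝 0)

/-- A forward Cauchy sequence for a (possibly non-symmetric) distance. -/
def ForwardCauchy {M : Type*} (d : M → M → ℝ) (u : ℕ → M) : Prop :=
  ∀ ε > (0 : ℝ), ∃ n₀ : ℕ, ∀ n m : ℕ, n₀ ≤ n → n ≤ m → d (u n) (u m) < ε

/-! Since `d x (y m) ≤ d x (y n) + d (y n) (y m)`, forward Cauchyness makes `m ↦ d x (y m)`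
nonincreasing up to arbitrarily small errors from some index on. A real sequence with this property
that is bounded below (here by `0`) is Cauchy: past an index where it comes within `ε` of the
infimum of its tail, it can neither drop below that infimum nor rise by `ε`. -/

theorem Real.cauchySeq_of_bddBelow_of_forall_lt_add {u : ℕ → ℝ} (hbdd : BddBelow (Set.range u))
    (h : ∀ ε > 0, ∃ N, ∀ n m, N ≤ n → n ≤ m → u m < u n + ε) : CauchySeq u := by
  rw [Metric.cauchySeq_iff']
  intro ε hε
  obtain ⟨N₀, hN₀⟩ := h ε hε
  have hbdd_tail : BddBelow (Set.range fun k => u (N₀ + k)) :=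
    hbdd.mono (Set.range_comp_subset_range _ u)
  obtain ⟨k, hk⟩ := exists_lt_of_ciInf_lt (lt_add_of_pos_right (⨅ k, u (N₀ + k)) hε)
  refine ⟨N₀ + k, fun n hn => ?_⟩
  have h_inf_le : ⨅ k, u (N₀ + k) ≤ u n := by
    obtain ⟨j, rfl⟩ := Nat.exists_eq_add_of_le (le_of_add_le_left hn)
    exact ciInf_le hbdd_tail j
  have h_lt := hN₀ (N₀ + k) n (Nat.le_add_right _ _) hn
  rw [Real.dist_eq, abs_lt]
  constructor <;> linarith

/-- For any `x ∈ M` and any forward Cauchy sequence `{y m}`, the sequence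
`{d (x, y m)}` converges in `ℝ`. -/
theorem dist_to_forwardCauchy_converges {M : Type*} (G : GenMetric M)
    (y : ℕ → M) (hy : ForwardCauchy G.d y) (x : M) :
    ∃ L : ℝ, Tendsto (fun m => G.d x (y m)) atTop (𝓝 L) := by
  have hbdd : BddBelow (Set.range fun m => G.d x (y m)) :=
    ⟨0, by rintro _ ⟨m, rfl⟩; exact G.d_nonneg _ _⟩
  have h_almost_antitone : ∀ ε > 0, ∃ N, ∀ n m, N ≤ n → n ≤ m → G.d x (y m) < G.d x (y n) + ε :=
    fun ε hε => (hy ε hε).imp fun N hN n m hn hnm => by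
      linarith [G.d_triangle x (y n) (y m), hN n m hn hnm]
  exact cauchySeq_tendsto_of_complete
    (Real.cauchySeq_of_bddBelow_of_forall_lt_add hbdd h_almost_antitone)
end

section
/- In a generalized metric space (M,d), for any two forward Cauchy sequences {x_n} and {y_m}, the double limit lim_n (lim_m d(x_n, y_m)) exists in [0, ∞] (i.e., the inner limits exist in [0,∞] for large n and the resulting sequence converges in [0,∞]). -/
open Filter Topology

open scoped ENNReal

/-- `ℓ ∈ [0,∞]` is the double limit `lim_n (lim_m d (x n) (y m))`:
for each `n` the inner limit exists in `[0,∞]` and the resulting sequence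
of inner limits converges to `ℓ` in `[0,∞]`. -/
def IsDoubleLim {M : Type*} (d : M → M → ℝ) (x y : ℕ → M) (ℓ : ℝ≥0∞) : Prop :=
  ∃ L : ℕ → ℝ≥0∞,
    (∀ n, Tendsto (fun m => ENNReal.ofReal (d (x n) (y m))) atTop (𝓝 (L n))) ∧
    Tendsto L atTop (𝓝 ℓ)

/-!
Since `d (y m) (y m')` is small for `m ≤ m'`, the triangle inequality makes `m ↦ d (x n) (y m)`
almost antitone, and since `d (x n) (x n')` is small for `n ≤ n'`, it makes the inner limits
`n ↦ lim_m d (x n) (y m)` almost monotone. In `[0,∞]` such sequences have `limsup ≤ liminf + ε`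
for every `ε > 0`, hence converge.
-/

namespace ENNReal

variable {a : ℕ → ℝ≥0∞}

lemma tendsto_liminf_of_limsup_le_liminf_add
    (h : ∀ ε : ℝ, 0 < ε → limsup a atTop ≤ liminf a atTop + ENNReal.ofReal ε) :
    Tendsto a atTop (𝓝 (liminf a atTop)) := by
  have hle : limsup a atTop ≤ liminf a atTop :=
    ENNReal.le_of_forall_pos_le_add fun ε hε _ => by
      simpa [ENNReal.ofReal_coe_nnreal] using h ε (by exact_mod_cast hε)
  exact tendsto_of_liminf_eq_limsup rfl (le_antisymm hle liminf_le_limsup)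

lemma tendsto_liminf_of_almost_antitone
    (h : ∀ ε : ℝ, 0 < ε → ∃ N, ∀ n m, N ≤ n → n ≤ m → a m ≤ a n + ENNReal.ofReal ε) :
    Tendsto a atTop (𝓝 (liminf a atTop)) := by
  refine tendsto_liminf_of_limsup_le_liminf_add fun ε hε => ?_
  obtain ⟨N, hN⟩ := h ε hε
  have limsup_le : ∀ n, N ≤ n → limsup a atTop - ENNReal.ofReal ε ≤ a n := fun n hn =>
    tsub_le_iff_right.mpr <| limsup_le_of_le (by isBoundedDefault) <|
      (eventually_ge_atTop n).mono fun m hm => hN n m hn hm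
  exact tsub_le_iff_right.mp <| le_liminf_of_le (by isBoundedDefault) <|
    (eventually_ge_atTop N).mono limsup_le

lemma tendsto_liminf_of_almost_monotone
    (h : ∀ ε : ℝ, 0 < ε → ∃ N, ∀ n m, N ≤ n → n ≤ m → a n ≤ a m + ENNReal.ofReal ε) :
    Tendsto a atTop (𝓝 (liminf a atTop)) := by
  refine tendsto_liminf_of_limsup_le_liminf_add fun ε hε => ?_
  obtain ⟨N, hN⟩ := h ε hε
  have le_liminf : ∀ n, N ≤ n → a n ≤ liminf a atTop + ENNReal.ofReal ε := fun n hn =>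
    tsub_le_iff_right.mp <| le_liminf_of_le (by isBoundedDefault) <|
      (eventually_ge_atTop n).mono fun m hm => tsub_le_iff_right.mpr (hN n m hn hm)
  exact limsup_le_of_le (by isBoundedDefault) <| (eventually_ge_atTop N).mono le_liminf

end ENNReal

namespace GenMetric

variable {M : Type*} (G : GenMetric M)

lemma ofReal_d_le_add (a b c : M) :
    ENNReal.ofReal (G.d a c) ≤ ENNReal.ofReal (G.d a b) + ENNReal.ofReal (G.d b c) := by
  rw [← ENNReal.ofReal_add (G.d_nonneg a b) (G.d_nonneg b c)]
  exact ENNReal.ofReal_le_ofReal (G.d_triangle a b c)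

lemma tendsto_ofReal_d_liminf {y : ℕ → M} (hy : ForwardCauchy G.d y) (z : M) :
    Tendsto (fun m => ENNReal.ofReal (G.d z (y m))) atTop
      (𝓝 (liminf (fun m => ENNReal.ofReal (G.d z (y m))) atTop)) := by
  refine ENNReal.tendsto_liminf_of_almost_antitone fun ε hε => ?_
  obtain ⟨N, hN⟩ := hy ε hε
  refine ⟨N, fun m m' hm hm' => (G.ofReal_d_le_add z (y m) (y m')).trans ?_⟩
  gcongr
  exact (hN m m' hm hm').le

end GenMetric

/-- For any two forward Cauchy sequences the double limit
`lim_n (lim_m d (x n) (y m))` exists in `[0,∞]`. -/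
theorem doubleLim_exists {M : Type*} (G : GenMetric M)
    (x y : ℕ → M) (hx : ForwardCauchy G.d x) (hy : ForwardCauchy G.d y) :
    ∃ ℓ : ℝ≥0∞, IsDoubleLim G.d x y ℓ := by
  set L : ℕ → ℝ≥0∞ := fun n => liminf (fun m => ENNReal.ofReal (G.d (x n) (y m))) atTop
  have hL : ∀ n, Tendsto (fun m => ENNReal.ofReal (G.d (x n) (y m))) atTop (𝓝 (L n)) :=
    fun n => G.tendsto_ofReal_d_liminf hy (x n)
  refine ⟨liminf L atTop, L, hL, ENNReal.tendsto_liminf_of_almost_monotone fun ε hε => ?_⟩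
  obtain ⟨N, hN⟩ := hx ε hε
  refine ⟨N, fun n n' hn hn' =>
    le_of_tendsto_of_tendsto' (hL n) ((hL n').add tendsto_const_nhds) fun m => ?_⟩
  calc ENNReal.ofReal (G.d (x n) (y m))
      ≤ ENNReal.ofReal (G.d (x n) (x n')) + ENNReal.ofReal (G.d (x n') (y m)) :=
        G.ofReal_d_le_add _ _ _
    _ ≤ ENNReal.ofReal ε + ENNReal.ofReal (G.d (x n') (y m)) := by
        gcongr
        exact (hN n n' hn hn').le
    _ = ENNReal.ofReal (G.d (x n') (y m)) + ENNReal.ofReal ε := add_comm _ _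
end

section
/- In a generalized metric space, the relation on forward Cauchy sequences defined by σ ∼ σ' iff lim_n(lim_m d(x_n, x'_m)) = 0 and lim_n(lim_m d(x'_n, x_m)) = 0 is an equivalence relation (in particular, it is transitive). -/
open Filter Topology

/-- The double limit `lim_n (lim_m d (x n) (y m)) = 0`, expressed by the
ε-characterization of iterated limits (valid since `d ≥ 0`). -/
def DoubleLimZero {M : Type*} (d : M → M → ℝ) (x y : ℕ → M) : Prop :=
  ∀ ε > (0 : ℝ), ∃ n₀ : ℕ, ∀ n ≥ n₀, ∃ m₀ : ℕ, ∀ m ≥ m₀, d (x n) (y m) < ε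

/-- Two sequences are equivalent when both double limits vanish. -/
def CauEquiv {M : Type*} (d : M → M → ℝ) (x y : ℕ → M) : Prop :=
  DoubleLimZero d x y ∧ DoubleLimZero d y x

section

variable {M : Type*} {d : M → M → ℝ}

theorem ForwardCauchy.doubleLimZero_self {u : ℕ → M} (hu : ForwardCauchy d u) :
    DoubleLimZero d u u := by
  intro ε hε
  obtain ⟨n₀, hn₀⟩ := hu ε hε
  exact ⟨n₀, fun n hn => ⟨n, fun m hm => hn₀ n m hn hm⟩⟩

/-- Route `d (x n) (z m)` through `y k` with `k = max m₀ n₁`, large enough for both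
hypotheses at once. -/
theorem DoubleLimZero.trans (triangle : ∀ a b c, d a c ≤ d a b + d b c) {x y z : ℕ → M}
    (hxy : DoubleLimZero d x y) (hyz : DoubleLimZero d y z) : DoubleLimZero d x z := by
  intro ε hε
  obtain ⟨n₀, hn₀⟩ := hxy (ε / 2) (half_pos hε)
  obtain ⟨n₁, hn₁⟩ := hyz (ε / 2) (half_pos hε)
  refine ⟨n₀, fun n hn => ?_⟩
  obtain ⟨m₀, hm₀⟩ := hn₀ n hn
  obtain ⟨m₁, hm₁⟩ := hn₁ (max m₀ n₁) (le_max_right _ _)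
  refine ⟨m₁, fun m hm => ?_⟩
  calc d (x n) (z m) ≤ d (x n) (y (max m₀ n₁)) + d (y (max m₀ n₁)) (z m) := triangle _ _ _
    _ < ε / 2 + ε / 2 := add_lt_add (hm₀ _ (le_max_left _ _)) (hm₁ m hm)
    _ = ε := add_halves ε

theorem CauEquiv.refl_of_forwardCauchy {u : ℕ → M} (hu : ForwardCauchy d u) :
    CauEquiv d u u :=
  ⟨hu.doubleLimZero_self, hu.doubleLimZero_self⟩

theorem CauEquiv.symm {x y : ℕ → M} (h : CauEquiv d x y) : CauEquiv d y x :=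
  ⟨h.2, h.1⟩

theorem CauEquiv.trans (triangle : ∀ a b c, d a c ≤ d a b + d b c) {x y z : ℕ → M}
    (hxy : CauEquiv d x y) (hyz : CauEquiv d y z) : CauEquiv d x z :=
  ⟨hxy.1.trans triangle hyz.1, hyz.2.trans triangle hxy.2⟩

end

/-- The relation `σ ∼ σ'` (both double limits vanish) is an equivalence relation
on the set of forward Cauchy sequences: it is reflexive, symmetric and transitive. -/
theorem cauEquiv_is_equivalence {M : Type*} (G : GenMetric M) :
    (∀ x : ℕ → M, ForwardCauchy G.d x → CauEquiv G.d x x) ∧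
    (∀ x y : ℕ → M, ForwardCauchy G.d x → ForwardCauchy G.d y →
      CauEquiv G.d x y → CauEquiv G.d y x) ∧
    (∀ x y z : ℕ → M, ForwardCauchy G.d x → ForwardCauchy G.d y → ForwardCauchy G.d z →
      CauEquiv G.d x y → CauEquiv G.d y z → CauEquiv G.d x z) :=
  ⟨fun _ hx => CauEquiv.refl_of_forwardCauchy hx,
    fun _ _ _ _ h => h.symm,
    fun _ _ _ _ _ _ hxy hyz => hxy.trans G.d_triangle hyz⟩
end

section
/- In a generalized metric space, if two forward Cauchy sequences {x_n} and {x'_n} are equivalent (both double limits lim_n lim_m d(x_n,x'_m) and lim_n lim_m d(x'_n,x_m) are zero), then for every point x ∈ M, lim_n d(x_n, x) = lim_n d(x'_n, x) as limits in [0,∞]. -/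
/-!
The triangle inequality `d(xₙ, p) ≤ d(xₙ, x'ₘ) + d(x'ₘ, p)`, combined with the vanishing double
limit, gives `limsup d(xₙ, p) ≤ liminf d(x'ₘ, p)` in `[0, ∞]`; by symmetry also
`limsup d(x'ₙ, p) ≤ liminf d(xₘ, p)`. Going around the cycle
`liminf ≤ limsup ≤ liminf ≤ limsup ≤ liminf` forces all four values to agree, so both
sequences converge to the same limit.
-/

open Filter Topology

open scoped ENNReal

theorem tendsto_liminf_of_limsup_le_liminf_cross {α β : Type*} [CompleteLinearOrder α]
    [TopologicalSpace α] [OrderTopology α] {l : Filter β} [l.NeBot] {f g : β → α}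
    (hfg : limsup f l ≤ liminf g l) (hgf : limsup g l ≤ liminf f l) :
    Tendsto f l (𝓝 (liminf f l)) ∧ Tendsto g l (𝓝 (liminf f l)) := by
  have hf : liminf f l ≤ limsup f l := liminf_le_limsup
  have hg : liminf g l ≤ limsup g l := liminf_le_limsup
  have hf_eq : limsup f l = liminf f l := le_antisymm (hfg.trans (hg.trans hgf)) hf
  have hg_eq : limsup g l = liminf f l := le_antisymm hgf (hf.trans (hfg.trans hg))
  have hg_eq' : liminf g l = liminf f l := le_antisymm (hg.trans hg_eq.le) (hf.trans hfg)
  exact ⟨tendsto_of_liminf_eq_limsup rfl hf_eq, tendsto_of_liminf_eq_limsup hg_eq' hg_eq⟩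

theorem DoubleLimZero.limsup_le_liminf {M : Type*} {d : M → M → ℝ}
    (htri : ∀ x y z, d x z ≤ d x y + d y z) {x y : ℕ → M} (h : DoubleLimZero d x y) (p : M) :
    limsup (fun n => ENNReal.ofReal (d (x n) p)) atTop ≤
      liminf (fun m => ENNReal.ofReal (d (y m) p)) atTop := by
  refine ENNReal.le_of_forall_pos_le_add fun ε hε _ => ?_
  obtain ⟨n₀, hn₀⟩ := h ε hε
  refine limsup_le_of_le (by isBoundedDefault) ?_
  filter_upwards [eventually_ge_atTop n₀] with n hn
  obtain ⟨m₀, hm₀⟩ := hn₀ n hn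
  rw [← tsub_le_iff_right]
  refine le_liminf_of_le (by isBoundedDefault) ?_
  filter_upwards [eventually_ge_atTop m₀] with m hm
  rw [tsub_le_iff_left]
  calc ENNReal.ofReal (d (x n) p)
      ≤ ENNReal.ofReal (d (x n) (y m) + d (y m) p) := ENNReal.ofReal_le_ofReal (htri _ _ _)
    _ ≤ ENNReal.ofReal (d (x n) (y m)) + ENNReal.ofReal (d (y m) p) := ENNReal.ofReal_add_le
    _ ≤ ε + ENNReal.ofReal (d (y m) p) := by
        gcongr
        simpa using ENNReal.ofReal_le_ofReal (hm₀ m hm).le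

theorem equiv_seqs_same_dist_limit_general {M : Type*} (G : GenMetric M)
    (x x' : ℕ → M) (heq : CauEquiv G.d x x') :
    ∀ p : M, ∃ ℓ : ℝ≥0∞,
      Tendsto (fun n => ENNReal.ofReal (G.d (x n) p)) atTop (𝓝 ℓ) ∧
      Tendsto (fun n => ENNReal.ofReal (G.d (x' n) p)) atTop (𝓝 ℓ) :=
  fun p => ⟨_, tendsto_liminf_of_limsup_le_liminf_cross
    (heq.1.limsup_le_liminf G.d_triangle p) (heq.2.limsup_le_liminf G.d_triangle p)⟩

/-- If two forward Cauchy sequences are equivalent, then for every point `p ∈ M`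
the limits `lim_n d (x n, p)` and `lim_n d (x' n, p)` exist in `[0,∞]` and coincide. -/
theorem equiv_seqs_same_dist_limit {M : Type*} (G : GenMetric M)
    (x x' : ℕ → M) (hx : ForwardCauchy G.d x) (hx' : ForwardCauchy G.d x')
    (heq : CauEquiv G.d x x') :
    ∀ p : M, ∃ ℓ : ℝ≥0∞,
      Tendsto (fun n => ENNReal.ofReal (G.d (x n) p)) atTop (𝓝 ℓ) ∧
      Tendsto (fun n => ENNReal.ofReal (G.d (x' n) p)) atTop (𝓝 ℓ) :=
  equiv_seqs_same_dist_limit_general G x x' heq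
end

section
/- In a generalized metric space, every alternative Cauchy sequence {x_n} contains a subsequence {x_{n_k}} which is a forward Cauchy sequence, and moreover lim_k(lim_l d(x_{n_k}, x_{n_l})) = 0 and lim_n(lim_k d(x_n, x_{n_k})) = 0 (the sequence and subsequence are equivalent). -/
open Filter Topology

/-- An alternative (forward) Cauchy sequence: `lim_n (lim_m d (x n) (x m)) = 0`. -/
def AltCauchy {M : Type*} (d : M → M → ℝ) (u : ℕ → M) : Prop :=
  ∀ ε > (0 : ℝ), ∃ n₀ : ℕ, ∀ n ≥ n₀, ∃ m₀ : ℕ, ∀ m ≥ m₀, d (u n) (u m) < ε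

/-! Choose the subsequence so that consecutive terms are `2⁻ᵏ`-close, which the alternative
Cauchy condition allows one step at a time: `φ (k + 1)` is taken beyond the threshold `m₀` for
the point `u (φ k)`. Summable steps make the subsequence forward Cauchy by the triangle
inequality, and any subsequence inherits `lim_n lim_m d (u n) (u m) = 0` in its second
argument. -/

theorem exists_strictMono_forall_le_and_le_succ (N : ℕ → ℕ) (M : ℕ → ℕ → ℕ) :
    ∃ φ : ℕ → ℕ, StrictMono φ ∧ (∀ k, N k ≤ φ k) ∧ ∀ k, M k (φ k) ≤ φ (k + 1) := by
  let φ : ℕ → ℕ := fun k =>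
    Nat.rec (N 0) (fun k φk => max (max (N (k + 1)) (φk + 1)) (M k φk)) k
  have hφ_succ : ∀ k, φ (k + 1) = max (max (N (k + 1)) (φ k + 1)) (M k (φ k)) :=
    fun _ => rfl
  refine ⟨φ, strictMono_nat_of_lt_succ fun k => ?_, fun k => ?_, fun k => ?_⟩
  · rw [hφ_succ]; omega
  · cases k with
    | zero => exact le_rfl
    | succ k => rw [hφ_succ]; omega
  · rw [hφ_succ]; omega

theorem AltCauchy.exists_strictMono_d_succ_lt {M : Type*} {d : M → M → ℝ} {u : ℕ → M}
    (hu : AltCauchy d u) (ε : ℕ → ℝ) (hε : ∀ k, 0 < ε k) :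
    ∃ φ : ℕ → ℕ, StrictMono φ ∧ ∀ k, d (u (φ k)) (u (φ (k + 1))) < ε k := by
  choose N hN using fun k => hu (ε k) (hε k)
  have hM : ∀ k n, ∃ m₀, N k ≤ n → ∀ m ≥ m₀, d (u n) (u m) < ε k := fun k n =>
    if hn : N k ≤ n then (hN k n hn).imp fun _ h _ => h else ⟨0, fun h => absurd h hn⟩
  choose M hM using hM
  obtain ⟨φ, hφ, hNφ, hMφ⟩ := exists_strictMono_forall_le_and_le_succ N M
  exact ⟨φ, hφ, fun k => hM k (φ k) (hNφ k) _ (hMφ k)⟩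

theorem DoubleLimZero.comp_right {M : Type*} {d : M → M → ℝ} {x y : ℕ → M}
    (h : DoubleLimZero d x y) {φ : ℕ → ℕ} (hφ : Tendsto φ atTop atTop) :
    DoubleLimZero d x (y ∘ φ) := by
  intro ε hε
  obtain ⟨n₀, hn₀⟩ := h ε hε
  refine ⟨n₀, fun n hn => ?_⟩
  obtain ⟨m₀, hm₀⟩ := hn₀ n hn
  obtain ⟨k₀, hk₀⟩ := eventually_atTop.1 (hφ.eventually_ge_atTop m₀)
  exact ⟨k₀, fun k hk => hm₀ (φ k) (hk₀ k hk)⟩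

theorem ForwardCauchy.doubleLimZero {M : Type*} {d : M → M → ℝ} {u : ℕ → M}
    (hu : ForwardCauchy d u) : DoubleLimZero d u u := by
  intro ε hε
  obtain ⟨n₀, hn₀⟩ := hu ε hε
  exact ⟨n₀, fun n hn => ⟨n, fun m hm => hn₀ n m hn hm⟩⟩

namespace GenMetric

variable {M : Type*} (G : GenMetric M)

theorem d_self (x : M) : G.d x x = 0 :=
  ((G.d_eq_zero_iff x x).2 rfl).1

theorem d_le_Ico_sum_d (u : ℕ → M) {n m : ℕ} (hnm : n ≤ m) :
    G.d (u n) (u m) ≤ ∑ i ∈ Finset.Ico n m, G.d (u i) (u (i + 1)) := by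
  induction m, hnm using Nat.le_induction with
  | base => simp [G.d_self]
  | succ m hnm ih =>
    rw [Finset.sum_Ico_succ_top hnm]
    exact (G.d_triangle _ (u m) _).trans (by gcongr)

theorem forwardCauchy_of_d_le_of_summable {u : ℕ → M} (b : ℕ → ℝ)
    (hu : ∀ k, G.d (u k) (u (k + 1)) ≤ b k) (hb : Summable b) : ForwardCauchy G.d u := by
  have hb_nonneg : ∀ k, 0 ≤ b k := fun k => (G.d_nonneg _ _).trans (hu k)
  have h_tail : ∀ n m, n ≤ m → G.d (u n) (u m) ≤ ∑' k, b (k + n) := fun n m hnm =>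
    calc G.d (u n) (u m) ≤ ∑ i ∈ Finset.Ico n m, G.d (u i) (u (i + 1)) :=
          G.d_le_Ico_sum_d u hnm
      _ ≤ ∑ i ∈ Finset.Ico n m, b i := Finset.sum_le_sum fun i _ => hu i
      _ = ∑ k ∈ Finset.range (m - n), b (k + n) := by
        simp only [Finset.sum_Ico_eq_sum_range, add_comm n]
      _ ≤ ∑' k, b (k + n) :=
        ((summable_nat_add_iff n).2 hb).sum_le_tsum _ fun k _ => hb_nonneg _
  intro ε hε
  obtain ⟨n₀, hn₀⟩ :=
    eventually_atTop.1 ((tendsto_order.1 (tendsto_sum_nat_add b)).2 ε hε)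
  exact ⟨n₀, fun n m hn hnm => (h_tail n m hnm).trans_lt (hn₀ n hn)⟩

end GenMetric

/-- Every alternative Cauchy sequence contains a subsequence which is a forward
Cauchy sequence and which is equivalent to the original sequence:
`lim_k (lim_l d (x (φ k)) (x (φ l))) = 0` and `lim_n (lim_k d (x n) (x (φ k))) = 0`. -/
theorem altCauchy_has_forwardCauchy_subseq {M : Type*} (G : GenMetric M)
    (u : ℕ → M) (hu : AltCauchy G.d u) :
    ∃ φ : ℕ → ℕ, StrictMono φ ∧ ForwardCauchy G.d (u ∘ φ) ∧
      DoubleLimZero G.d (u ∘ φ) (u ∘ φ) ∧ DoubleLimZero G.d u (u ∘ φ) := by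
  obtain ⟨φ, hφ, h_step⟩ := hu.exists_strictMono_d_succ_lt (fun k => (1 / 2) ^ k) fun k => by
    positivity
  have h_forward : ForwardCauchy G.d (u ∘ φ) :=
    G.forwardCauchy_of_d_le_of_summable _ (fun k => (h_step k).le) summable_geometric_two
  exact ⟨φ, hφ, h_forward, h_forward.doubleLimZero,
    DoubleLimZero.comp_right hu hφ.tendsto_atTop⟩
end

section
/- In a generalized metric space, if {x_n} and {x'_n} are forward Cauchy sequences equivalent for d (both double limits lim_n lim_m d(x_n,x'_m) and lim_n lim_m d(x'_n,x_m) vanish) and {x_n} is also a backward Cauchy sequence (forward Cauchy for the reversed distance d^rev(x,y) = d(y,x)), then {x'_n} is a backward Cauchy sequence and the two sequences are equivalent for d^rev. -/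
/-!
Every step is a single triangle inequality through a term of `x` far enough out. Backward
Cauchyness of `x` makes `d (x m) (x k)` small for `k ≤ m`, which lets one move along `x` to an
index where the equivalence of `x` and `x'` applies; this swaps the order of the arguments in
both double limits. Finally `d (x' m) (x' n) ≤ d (x' m) (x p) + d (x p) (x' n)` with `p` large
bounds `d^rev` on `x'` by the two double limits between `x'` and `x`.
-/

open Filter Topology

abbrev BackwardCauchy {M : Type*} (d : M → M → ℝ) (u : ℕ → M) : Prop :=
  ForwardCauchy (flip d) u

section Triangle

variable {M : Type*} {d : M → M → ℝ} (hd : ∀ x y z, d x z ≤ d x y + d y z)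
include hd

theorem DoubleLimZero.flip_of_backwardCauchy_right {x y : ℕ → M} (hyx : DoubleLimZero d y x)
    (hx : BackwardCauchy d x) : DoubleLimZero (flip d) x y := by
  intro ε hε
  obtain ⟨B, hB⟩ := hyx (ε / 2) (by linarith)
  obtain ⟨D, hD⟩ := hx (ε / 2) (by linarith)
  refine ⟨D, fun n hn => ⟨B, fun m hm => ?_⟩⟩
  obtain ⟨p₀, hp₀⟩ := hB m hm
  have hyp : d (y m) (x (max p₀ n)) < ε / 2 := hp₀ _ (le_max_left _ _)
  have hxp : d (x (max p₀ n)) (x n) < ε / 2 := hD n _ hn (le_max_right _ _)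
  show d (y m) (x n) < ε
  linarith [hd (y m) (x (max p₀ n)) (x n)]

theorem DoubleLimZero.flip_of_backwardCauchy_left {x y : ℕ → M} (hxy : DoubleLimZero d x y)
    (hx : BackwardCauchy d x) : DoubleLimZero (flip d) y x := by
  intro ε hε
  obtain ⟨C, hC⟩ := hxy (ε / 2) (by linarith)
  obtain ⟨D, hD⟩ := hx (ε / 2) (by linarith)
  obtain ⟨n₀, hn₀⟩ := hC (max C D) (le_max_left _ _)
  refine ⟨n₀, fun n hn => ⟨max C D, fun m hm => ?_⟩⟩
  have hxk : d (x m) (x (max C D)) < ε / 2 := hD _ m (le_max_right _ _) hm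
  have hky : d (x (max C D)) (y n) < ε / 2 := hn₀ n hn
  show d (x m) (y n) < ε
  linarith [hd (x m) (x (max C D)) (y n)]

theorem BackwardCauchy.of_doubleLimZero {u v : ℕ → M} (huv : DoubleLimZero d u v)
    (huv' : DoubleLimZero (flip d) u v) : BackwardCauchy d u := by
  intro ε hε
  obtain ⟨N₁, hN₁⟩ := huv (ε / 2) (by linarith)
  obtain ⟨N₂, hN₂⟩ := huv' (ε / 2) (by linarith)
  refine ⟨max N₁ N₂, fun n m hn hnm => ?_⟩
  obtain ⟨p₁, hp₁⟩ := hN₁ m (by omega)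
  obtain ⟨p₂, hp₂⟩ := hN₂ n (le_of_max_le_right hn)
  have hup : d (u m) (v (max p₁ p₂)) < ε / 2 := hp₁ _ (le_max_left _ _)
  have hpu : d (v (max p₁ p₂)) (u n) < ε / 2 := hp₂ _ (le_max_right _ _)
  show d (u m) (u n) < ε
  linarith [hd (u m) (v (max p₁ p₂)) (u n)]

end Triangle

theorem backward_cauchy_transfer_general {M : Type*} (G : GenMetric M)
    (x x' : ℕ → M)
    (heq : CauEquiv G.d x x')
    (hrev : ForwardCauchy (fun a b => G.d b a) x) :
    ForwardCauchy (fun a b => G.d b a) x' ∧ CauEquiv (fun a b => G.d b a) x x' := by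
  obtain ⟨hxx', hx'x⟩ := heq
  have hrev_xx' : DoubleLimZero (flip G.d) x x' :=
    hx'x.flip_of_backwardCauchy_right G.d_triangle hrev
  have hrev_x'x : DoubleLimZero (flip G.d) x' x :=
    hxx'.flip_of_backwardCauchy_left G.d_triangle hrev
  exact ⟨BackwardCauchy.of_doubleLimZero G.d_triangle hx'x hrev_x'x, hrev_xx', hrev_x'x⟩

/-- If two forward Cauchy sequences are equivalent for `d` and one of them is
backward Cauchy (forward Cauchy for the reversed distance `d^rev (x,y) = d (y,x)`),
then the other is backward Cauchy as well, and they are equivalent for `d^rev`. -/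
theorem backward_cauchy_transfer {M : Type*} (G : GenMetric M)
    (x x' : ℕ → M) (hx : ForwardCauchy G.d x) (hx' : ForwardCauchy G.d x')
    (heq : CauEquiv G.d x x')
    (hrev : ForwardCauchy (fun a b => G.d b a) x) :
    ForwardCauchy (fun a b => G.d b a) x' ∧ CauEquiv (fun a b => G.d b a) x x' :=
  backward_cauchy_transfer_general G x x' heq hrev
end

section
/- The map d_Q on the forward Cauchy completion M_C^+ of a generalized metric space, defined on equivalence classes by d_Q([{x_n}],[{y_n}]) := lim_n(lim_m d(x_n,y_m)) ∈ [0,∞], is well defined (independent of the choice of representatives) and is a quasi-distance: it is nonnegative, satisfies d_Q(x,y)=d_Q(y,x)=0 iff x=y, and satisfies the triangle inequality d_Q(x,z) ≤ d_Q(x,y) + d_Q(y,z). -/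
open Filter Topology

open scoped ENNReal

/-!
Everything is driven by the triangle inequality through the iterated upper limit
`U(x, y) = limsup_n limsup_m d(xₙ, yₘ) ∈ [0, ∞]`, which is defined for all pairs of sequences.
Pushing `limsup` through `d(xₙ, z_k) ≤ d(xₙ, yₘ) + d(yₘ, z_k)`, first in `k` and then in `m`
and `n`, shows that `U` satisfies the triangle inequality; `U` agrees with every double limit
that exists and vanishes exactly when `DoubleLimZero` holds. Well-definedness is then
`U(x, y) ≤ U(x, x') + U(x', y') + U(y', y) = U(x', y')`. Forward Cauchyness is needed only to
make the inner limits exist: for `m ≤ m'` large, `d(p, y_{m'}) ≤ d(p, yₘ) + ε`.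
-/

open scoped NNReal

theorem ENNReal.limsup_add_le' {ι : Type*} {f : Filter ι} (u v : ι → ℝ≥0∞) :
    limsup (u + v) f ≤ limsup u f + limsup v f := by
  refine ENNReal.le_of_forall_pos_le_add fun ε hε hfin => ?_
  have hε2 : (ε / 2 : ℝ≥0∞) ≠ 0 := (ENNReal.half_pos (by exact_mod_cast hε.ne')).ne'
  obtain ⟨hu_fin, hv_fin⟩ := ENNReal.add_lt_top.1 hfin
  have hu := eventually_lt_of_limsup_lt (ENNReal.lt_add_right hu_fin.ne hε2)
  have hv := eventually_lt_of_limsup_lt (ENNReal.lt_add_right hv_fin.ne hε2)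
  calc limsup (u + v) f
      ≤ (limsup u f + ε / 2) + (limsup v f + ε / 2) :=
        limsup_le_of_le (by isBoundedDefault)
          ((hu.and hv).mono fun i h => add_le_add h.1.le h.2.le)
    _ = limsup u f + limsup v f + ε := by rw [add_add_add_comm, ENNReal.add_halves]

theorem ENNReal.exists_tendsto_of_eventually_le_add {f : ℕ → ℝ≥0∞}
    (h : ∀ ε : ℝ≥0, 0 < ε → ∀ᶠ m in atTop, ∀ᶠ m' in atTop, f m' ≤ f m + ε) :
    ∃ l, Tendsto f atTop (𝓝 l) := by
  refine ⟨limsup f atTop, tendsto_of_liminf_eq_limsup (le_antisymm liminf_le_limsup ?_) rfl⟩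
  refine ENNReal.le_of_forall_pos_le_add fun ε hε _ => ?_
  calc limsup f atTop
      ≤ liminf (fun m => f m + ε) atTop :=
        le_liminf_of_le (by isBoundedDefault)
          ((h ε hε).mono fun m hm => limsup_le_of_le (by isBoundedDefault) hm)
    _ = liminf f atTop + ε := liminf_add_const _ _ _ (by isBoundedDefault) (by isBoundedDefault)

noncomputable def upperDoubleLim {α β : Type*} (D : α → β → ℝ≥0∞) (x : ℕ → α) (y : ℕ → β) :
    ℝ≥0∞ :=
  limsup (fun n => limsup (fun m => D (x n) (y m)) atTop) atTop

section Triangle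

variable {α : Type*} {D : α → α → ℝ≥0∞}

theorem upperDoubleLim_le_add (htri : ∀ p q r, D p r ≤ D p q + D q r) (x y z : ℕ → α) :
    upperDoubleLim D x z ≤ upperDoubleLim D x y + upperDoubleLim D y z := by
  have inner (n m : ℕ) : limsup (fun k => D (x n) (z k)) atTop
      ≤ D (x n) (y m) + limsup (fun k => D (y m) (z k)) atTop := by
    rw [← limsup_const_add _ _ _ (by isBoundedDefault) (by isBoundedDefault)]
    exact limsup_le_limsup (Eventually.of_forall fun k => htri _ _ _)
  have middle (n : ℕ) : limsup (fun k => D (x n) (z k)) atTop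
      ≤ limsup (fun m => D (x n) (y m)) atTop + upperDoubleLim D y z :=
    (le_limsup_of_frequently_le (Frequently.of_forall (inner n))).trans
      (ENNReal.limsup_add_le' _ _)
  calc upperDoubleLim D x z
      ≤ limsup (fun n => limsup (fun m => D (x n) (y m)) atTop + upperDoubleLim D y z) atTop :=
        limsup_le_limsup (Eventually.of_forall middle)
    _ = upperDoubleLim D x y + upperDoubleLim D y z :=
        limsup_add_const _ _ _ (by isBoundedDefault) (by isBoundedDefault)

theorem upperDoubleLim_le_of_eq_zero (htri : ∀ p q r, D p r ≤ D p q + D q r)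
    {a x y b : ℕ → α} (hax : upperDoubleLim D a x = 0) (hyb : upperDoubleLim D y b = 0) :
    upperDoubleLim D a b ≤ upperDoubleLim D x y :=
  calc upperDoubleLim D a b
      ≤ upperDoubleLim D a x + upperDoubleLim D x b := upperDoubleLim_le_add htri a x b
    _ ≤ upperDoubleLim D a x + (upperDoubleLim D x y + upperDoubleLim D y b) := by
        gcongr; exact upperDoubleLim_le_add htri x y b
    _ = upperDoubleLim D x y := by rw [hax, hyb, zero_add, add_zero]

end Triangle

section RealValued

variable {M : Type*} {d : M → M → ℝ} {x y : ℕ → M}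

theorem ofReal_triangle (htri : ∀ p q r, d p r ≤ d p q + d q r) (p q r : M) :
    ENNReal.ofReal (d p r) ≤ ENNReal.ofReal (d p q) + ENNReal.ofReal (d q r) :=
  (ENNReal.ofReal_le_ofReal (htri p q r)).trans ENNReal.ofReal_add_le

theorem IsDoubleLim.upperDoubleLim_eq {ℓ : ℝ≥0∞} (h : IsDoubleLim d x y ℓ) :
    upperDoubleLim (fun p q => ENNReal.ofReal (d p q)) x y = ℓ := by
  obtain ⟨L, hL, hLℓ⟩ := h
  have : (fun n => limsup (fun m => ENNReal.ofReal (d (x n) (y m))) atTop) = L :=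
    funext fun n => (hL n).limsup_eq
  rw [upperDoubleLim, this, hLℓ.limsup_eq]

theorem doubleLimZero_iff_upperDoubleLim_eq_zero :
    DoubleLimZero d x y ↔ upperDoubleLim (fun p q => ENNReal.ofReal (d p q)) x y = 0 := by
  simp only [DoubleLimZero, ← eventually_atTop, ge_iff_le]
  constructor
  · intro h
    refine le_antisymm (ENNReal.le_of_forall_pos_le_add fun ε hε _ => ?_) zero_le
    rw [zero_add, ← ENNReal.ofReal_coe_nnreal]
    refine limsup_le_of_le (by isBoundedDefault) ((h ε hε).mono fun n hn => ?_)
    exact limsup_le_of_le (by isBoundedDefault)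
      (hn.mono fun m hm => ENNReal.ofReal_le_ofReal hm.le)
  · intro h ε hε
    have hlt : upperDoubleLim (fun p q => ENNReal.ofReal (d p q)) x y < ENNReal.ofReal ε := by
      rw [h]; exact ENNReal.ofReal_pos.2 hε
    filter_upwards [eventually_lt_of_limsup_lt hlt] with n hn
    filter_upwards [eventually_lt_of_limsup_lt hn] with m hm
    exact (ENNReal.ofReal_lt_ofReal_iff hε).1 hm

theorem ForwardCauchy.exists_tendsto_ofReal (htri : ∀ p q r, d p r ≤ d p q + d q r)
    (hy : ForwardCauchy d y) (p : M) :
    ∃ l, Tendsto (fun m => ENNReal.ofReal (d p (y m))) atTop (𝓝 l) := by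
  refine ENNReal.exists_tendsto_of_eventually_le_add fun ε hε => ?_
  obtain ⟨N, hN⟩ := hy ε hε
  filter_upwards [eventually_ge_atTop N] with m hm
  filter_upwards [eventually_ge_atTop m] with m' hm'
  calc ENNReal.ofReal (d p (y m'))
      ≤ ENNReal.ofReal (d p (y m)) + ENNReal.ofReal (d (y m) (y m')) :=
        ofReal_triangle htri _ _ _
    _ ≤ ENNReal.ofReal (d p (y m)) + ε := by
        gcongr
        rw [← ENNReal.ofReal_coe_nnreal]
        exact ENNReal.ofReal_le_ofReal (hN m m' hm hm').le

theorem DoubleLimZero.isDoubleLim_zero (htri : ∀ p q r, d p r ≤ d p q + d q r)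
    (hy : ForwardCauchy d y) (h : DoubleLimZero d x y) : IsDoubleLim d x y 0 := by
  choose L hL using fun n => hy.exists_tendsto_ofReal htri (x n)
  have hLsup : limsup L atTop = 0 := by
    rw [← doubleLimZero_iff_upperDoubleLim_eq_zero.1 h, upperDoubleLim]
    exact congrArg (limsup · atTop) (funext fun n => ((hL n).limsup_eq).symm)
  exact ⟨L, hL, tendsto_of_le_liminf_of_limsup_le zero_le hLsup.le⟩

end RealValued

/-- The extension `d_Q` of `d` to the forward Cauchy completion, given on classes
of forward Cauchy sequences by the double limit
`d_Q ([{xₙ}], [{yₙ}]) = lim_n (lim_m d (x n) (y m)) ∈ [0,∞]`, is well defined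
(independent of representatives) and is a quasi-distance:
it is nonnegative (automatic in `[0,∞]`), vanishes in both directions exactly on
equivalent (i.e. equal) classes, and satisfies the triangle inequality. -/
theorem dQ_well_defined_quasi_distance {M : Type*} (G : GenMetric M) :
    -- well-definedness on equivalence classes
    (∀ x x' y y' : ℕ → M, ForwardCauchy G.d x → ForwardCauchy G.d x' →
      ForwardCauchy G.d y → ForwardCauchy G.d y' →
      CauEquiv G.d x x' → CauEquiv G.d y y' →
      ∀ ℓ ℓ' : ℝ≥0∞, IsDoubleLim G.d x y ℓ → IsDoubleLim G.d x' y' ℓ' → ℓ = ℓ') ∧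
    -- axiom (a2): `d_Q (x,y) = d_Q (y,x) = 0` iff `x = y` in the completion
    (∀ x y : ℕ → M, ForwardCauchy G.d x → ForwardCauchy G.d y →
      ((IsDoubleLim G.d x y 0 ∧ IsDoubleLim G.d y x 0) ↔ CauEquiv G.d x y)) ∧
    -- axiom (a3): triangle inequality
    (∀ x y z : ℕ → M, ForwardCauchy G.d x → ForwardCauchy G.d y → ForwardCauchy G.d z →
      ∀ a b c : ℝ≥0∞, IsDoubleLim G.d x y a → IsDoubleLim G.d y z b →
        IsDoubleLim G.d x z c → c ≤ a + b) := by
  have htri := ofReal_triangle G.d_triangle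
  refine ⟨?_, ?_, ?_⟩
  · intro x x' y y' _ _ _ _ ⟨hxx', hx'x⟩ ⟨hyy', hy'y⟩ ℓ ℓ' h h'
    rw [← h.upperDoubleLim_eq, ← h'.upperDoubleLim_eq]
    simp only [doubleLimZero_iff_upperDoubleLim_eq_zero] at hxx' hx'x hyy' hy'y
    exact le_antisymm (upperDoubleLim_le_of_eq_zero htri hxx' hy'y)
      (upperDoubleLim_le_of_eq_zero htri hx'x hyy')
  · intro x y hx hy
    refine ⟨fun ⟨hxy, hyx⟩ => ?_, fun ⟨hxy, hyx⟩ => ?_⟩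
    · simp only [CauEquiv, doubleLimZero_iff_upperDoubleLim_eq_zero]
      exact ⟨hxy.upperDoubleLim_eq, hyx.upperDoubleLim_eq⟩
    · exact ⟨hxy.isDoubleLim_zero G.d_triangle hy, hyx.isDoubleLim_zero G.d_triangle hx⟩
  · intro x y z _ _ _ a b c hab hbc hac
    rw [← hab.upperDoubleLim_eq, ← hbc.upperDoubleLim_eq, ← hac.upperDoubleLim_eq]
    exact upperDoubleLim_le_add htri x y z
end

section
/- Let (M,d) be the generalized metric space of a Finsler manifold. If a sequence of finite Busemann functions {f_n} ⊂ B^+(M) converges pointwise to a function f ∈ B^+(M), then f is the unique limit of {f_n} in the chronological topology on B^+(M); in particular, f ∈ L̂({f_n}) for every subsequence, where L̂ is the chronological limit operator. -/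
open Filter Topology

/-- The filter of parameters `s ∈ [α, Ω)` approaching `Ω ∈ (-∞, +∞]`. -/
noncomputable def endFilter (α : ℝ) (Ω : EReal) : Filter ℝ :=
  Filter.comap (fun s : ℝ => (s : EReal)) (𝓝[<] Ω) ⊓ Filter.principal (Set.Ici α)

/-- `f` is a finite-valued Busemann function of `(M,d)`: there is a curve
`c : [α,Ω) → M` with `F(ċ) < 1` (encoded by `d (c s₁, c s₂) < s₂ - s₁`) such that
`f x = lim_{s→Ω} (s - d (x, c s))` (in particular the limit is finite). -/
def IsBusemann {M : Type*} (d : M → M → ℝ) (f : M → ℝ) : Prop :=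
  ∃ (α : ℝ) (Ω : EReal) (c : ℝ → M), (α : EReal) < Ω ∧
    (∀ s₁ s₂ : ℝ, α ≤ s₁ → s₁ < s₂ → (s₂ : EReal) < Ω → d (c s₁) (c s₂) < s₂ - s₁) ∧
    ∀ x : M, Tendsto (fun s : ℝ => s - d x (c s)) (endFilter α Ω) (𝓝 (f x))

/-- The space `B^+(M)` of finite Busemann functions. -/
abbrev BusemannSpace {M : Type*} (d : M → M → ℝ) : Type _ :=
  {f : M → ℝ // IsBusemann d f}

/-- The chronological limit operator `L̂` on `B^+(M)`: `g ∈ L̂({fₙ})` iff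
(a) `g ≤ liminf fₙ` pointwise and (b) `g` is maximal in `B^+(M)` among functions
`h` with `g ≤ h ≤ limsup fₙ`. -/
def Lhat {M : Type*} (d : M → M → ℝ) (F : ℕ → BusemannSpace d) :
    Set (BusemannSpace d) :=
  {g | (∀ x : M, ((g : M → ℝ) x : EReal) ≤
          Filter.liminf (fun n => (((F n : M → ℝ) x : ℝ) : EReal)) atTop) ∧
    ∀ h : BusemannSpace d, (∀ x, (g : M → ℝ) x ≤ (h : M → ℝ) x) →
      (∀ x : M, (((h : M → ℝ) x : ℝ) : EReal) ≤
          Filter.limsup (fun n => (((F n : M → ℝ) x : ℝ) : EReal)) atTop) → h = g}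

/-- A set is `L̂`-closed if it is stable under chronological limits of its sequences. -/
def LClosed {M : Type*} (d : M → M → ℝ) (C : Set (BusemannSpace d)) : Prop :=
  ∀ F : ℕ → BusemannSpace d, (∀ n, F n ∈ C) → Lhat d F ⊆ C

/-- The chronological topology on `B^+(M)`: the topology whose closed sets are
exactly the `L̂`-closed sets (generated by their complements). -/
def chronTopology {M : Type*} (d : M → M → ℝ) : TopologicalSpace (BusemannSpace d) :=
  TopologicalSpace.generateFrom {U | LClosed d Uᶜ}

/-!
A pointwise limit `g` is, by (a) and (b), a chronological limit of every subsequence, which gives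
convergence in the chronological topology. For uniqueness, each tail set `{g} ∪ {F n | n ≥ N}`
is `L̂`-closed: a sequence in it either repeats some value infinitely often, and then that value
is its only chronological limit, or it converges pointwise to `g`. Hence any chronological limit
lies in every tail set, and pointwise convergence `F n → g` forces it to equal `g`.
-/

lemma liminf_coe_ereal_eq_of_tendsto {u : ℕ → ℝ} {a : ℝ} (h : Tendsto u atTop (𝓝 a)) :
    liminf (fun n => (u n : EReal)) atTop = a :=
  ((continuous_coe_real_ereal.tendsto a).comp h).liminf_eq

lemma limsup_coe_ereal_eq_of_tendsto {u : ℕ → ℝ} {a : ℝ} (h : Tendsto u atTop (𝓝 a)) :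
    limsup (fun n => (u n : EReal)) atTop = a :=
  ((continuous_coe_real_ereal.tendsto a).comp h).limsup_eq

section PointwiseTopology

variable {X : Type*} [TopologicalSpace X]

/-- `H` eventually avoids the finitely many `F n` outside a given neighbourhood of `a`. -/
lemma tendsto_of_forall_eq_or_eq_apply {F H : ℕ → X} {a : X} (hF : Tendsto F atTop (𝓝 a))
    (hH : ∀ j, H j = a ∨ ∃ n, H j = F n) (hfin : ∀ n, ∀ᶠ j in atTop, H j ≠ F n) :
    Tendsto H atTop (𝓝 a) := by
  refine fun U hU => mem_map.mpr ?_
  obtain ⟨N, hN⟩ := eventually_atTop.mp (hF hU)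
  have hfar : ∀ᶠ j in atTop, ∀ n ∈ Set.Iio N, H j ≠ F n :=
    (Set.finite_Iio N).eventually_all.mpr fun n _ => hfin n
  filter_upwards [hfar] with j hj
  rw [Set.mem_preimage]
  rcases hH j with ha | ⟨n, hn⟩
  · exact ha ▸ mem_of_mem_nhds hU
  · exact hn ▸ hN n (not_lt.mp fun hlt => hj n hlt hn)

lemma eq_of_tendsto_of_forall_mem_insert_image_Ici [T1Space X] {F : ℕ → X} {a b : X}
    (hF : Tendsto F atTop (𝓝 a)) (hb : ∀ N, b ∈ insert a (F '' Set.Ici N)) : b = a := by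
  by_contra hba
  obtain ⟨N, hN⟩ := eventually_atTop.mp (hF (isOpen_compl_singleton.mem_nhds (Ne.symm hba)))
  obtain hba' | ⟨n, hn, rfl⟩ := hb N
  · exact hba hba'
  · exact hN n hn rfl

end PointwiseTopology

namespace BusemannSpace

variable {M : Type*} {d : M → M → ℝ}

lemma tendsto_nhds_iff {F : ℕ → BusemannSpace d} {g : BusemannSpace d} :
    Tendsto F atTop (𝓝 g) ↔ ∀ x, Tendsto (fun n => (F n : M → ℝ) x) atTop (𝓝 ((g : M → ℝ) x)) :=
  tendsto_subtype_rng.trans tendsto_pi_nhds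

lemma mem_Lhat_of_tendsto {F : ℕ → BusemannSpace d} {g : BusemannSpace d}
    (hF : ∀ x, Tendsto (fun n => (F n : M → ℝ) x) atTop (𝓝 ((g : M → ℝ) x))) :
    g ∈ Lhat d F := by
  refine ⟨fun x => (liminf_coe_ereal_eq_of_tendsto (hF x)).ge, fun h hgh hh => ?_⟩
  ext x
  have hhg : ((h : M → ℝ) x : EReal) ≤ ((g : M → ℝ) x : EReal) :=
    limsup_coe_ereal_eq_of_tendsto (hF x) ▸ hh x
  exact le_antisymm (EReal.coe_le_coe_iff.mp hhg) (hgh x)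

lemma eq_of_mem_Lhat_of_tendsto {F : ℕ → BusemannSpace d} {g k : BusemannSpace d}
    (hF : ∀ x, Tendsto (fun n => (F n : M → ℝ) x) atTop (𝓝 ((g : M → ℝ) x)))
    (hk : k ∈ Lhat d F) : k = g := by
  have hkg : ∀ x, (k : M → ℝ) x ≤ (g : M → ℝ) x := fun x =>
    EReal.coe_le_coe_iff.mp (liminf_coe_ereal_eq_of_tendsto (hF x) ▸ hk.1 x)
  exact (hk.2 g hkg fun x => (limsup_coe_ereal_eq_of_tendsto (hF x)).ge).symm

/-- A value taken infinitely often lies between `liminf` and `limsup`, so maximality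
in `L̂` forces every chronological limit to be that value. -/
lemma eq_of_mem_Lhat_of_frequently_eq {F : ℕ → BusemannSpace d} {b k : BusemannSpace d}
    (hb : ∃ᶠ n in atTop, F n = b) (hk : k ∈ Lhat d F) : k = b := by
  have hkb : ∀ x, (k : M → ℝ) x ≤ (b : M → ℝ) x := fun x =>
    EReal.coe_le_coe_iff.mp <| (hk.1 x).trans <|
      liminf_le_of_frequently_le' (hb.mono fun n hn => by rw [hn])
  exact (hk.2 b hkb fun x => le_limsup_of_frequently_le' (hb.mono fun n hn => by rw [hn])).symm

lemma lClosed_insert_image_Ici {F : ℕ → BusemannSpace d} {g : BusemannSpace d}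
    (hF : ∀ x, Tendsto (fun n => (F n : M → ℝ) x) atTop (𝓝 ((g : M → ℝ) x))) (N : ℕ) :
    LClosed d (insert g (F '' Set.Ici N)) := by
  intro H hH k hk
  by_cases hrep : ∃ b, ∃ᶠ j in atTop, H j = b
  · obtain ⟨b, hb⟩ := hrep
    obtain ⟨j, rfl⟩ := hb.exists
    exact eq_of_mem_Lhat_of_frequently_eq hb hk ▸ hH j
  · push Not at hrep
    have hHF : ∀ j, H j = g ∨ ∃ n, H j = F n := fun j =>
      (hH j).imp_right fun ⟨n, _, hn⟩ => ⟨n, hn.symm⟩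
    have hHg := tendsto_of_forall_eq_or_eq_apply (tendsto_nhds_iff.mpr hF) hHF
      fun n => hrep (F n)
    rw [eq_of_mem_Lhat_of_tendsto (tendsto_nhds_iff.mp hHg) hk]
    exact Set.mem_insert g _

lemma tendsto_chronTopology_of_forall_mem_Lhat {F : ℕ → BusemannSpace d} {g : BusemannSpace d}
    (h : ∀ φ : ℕ → ℕ, StrictMono φ → g ∈ Lhat d (F ∘ φ)) :
    Tendsto F atTop (@nhds _ (chronTopology d) g) := by
  refine TopologicalSpace.tendsto_nhds_generateFrom_iff.mpr fun U hU hgU => ?_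
  by_contra hnot
  obtain ⟨φ, hφ, hφU⟩ := extraction_of_frequently_atTop (not_eventually.mp hnot)
  exact hU (F ∘ φ) hφU (h φ hφ) hgU

lemma mem_of_tendsto_chronTopology {F : ℕ → BusemannSpace d} {g : BusemannSpace d}
    {C : Set (BusemannSpace d)} (hC : LClosed d C)
    (hF : Tendsto F atTop (@nhds _ (chronTopology d) g)) (hFC : ∀ᶠ n in atTop, F n ∈ C) :
    g ∈ C := by
  by_contra hgC
  have hopen : LClosed d Cᶜᶜ := (compl_compl C).symm ▸ hC
  obtain ⟨n, hnC, hnC'⟩ :=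
    (hFC.and (TopologicalSpace.tendsto_nhds_generateFrom_iff.mp hF Cᶜ hopen hgC)).exists
  exact hnC' hnC

end BusemannSpace

open BusemannSpace

/-- If a sequence of finite Busemann functions converges pointwise to a finite
Busemann function `g`, then `g ∈ L̂` of every subsequence and `g` is the unique
limit of the sequence in the chronological topology. -/
theorem pointwise_limit_unique_chron_limit {M : Type*} (G : GenMetric M)
    (F : ℕ → BusemannSpace G.d) (g : BusemannSpace G.d)
    (hconv : ∀ x : M, Tendsto (fun n => (F n : M → ℝ) x) atTop (𝓝 ((g : M → ℝ) x))) :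
    (∀ φ : ℕ → ℕ, StrictMono φ → g ∈ Lhat G.d (F ∘ φ)) ∧
    Tendsto F atTop (@nhds _ (chronTopology G.d) g) ∧
    (∀ g' : BusemannSpace G.d,
      Tendsto F atTop (@nhds _ (chronTopology G.d) g') → g' = g) := by
  have hsub : ∀ φ : ℕ → ℕ, StrictMono φ → g ∈ Lhat G.d (F ∘ φ) := fun φ hφ =>
    mem_Lhat_of_tendsto fun x => (hconv x).comp hφ.tendsto_atTop
  refine ⟨hsub, tendsto_chronTopology_of_forall_mem_Lhat hsub, fun g' hg' => ?_⟩
  refine eq_of_tendsto_of_forall_mem_insert_image_Ici (tendsto_nhds_iff.mpr hconv) fun N => ?_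
  refine mem_of_tendsto_chronTopology (lClosed_insert_image_Ici hconv N) hg' ?_
  filter_upwards [eventually_ge_atTop N] with n hn
  exact Set.mem_insert_of_mem g ⟨n, hn, rfl⟩
end
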